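/- Let R be an associative unital ring, let a, b, c, d ∈ R, and suppose y is the (b,c)-inverse of a and z is the (b,c)-inverse of d. Then the following statements are equivalent: (i) y·a = z·d; (ii) z·d·y·a = y·a·z·d; (iii) y·d·z·a = z·a·y·d; (iv) y·d is group invertible with group inverse z·a; (v) z·a is group invertible with group inverse y·d. -/

import Mathlib

/-!
Two (b,c)-inverses for the same `b` and `c` absorb each other: `y = b r y` and `z d b = b` give
`z d y = y`, and symmetrically `y d z = y`, `y a z = z`, `z a y = z`. These identities reduce
each of the conditions (ii)–(v) to `y a = z d`.
-/

/-- `y` is a (b,c)-inverse of `a`. -/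
def IsBCInverse {R : Type*} [Ring R] (a b c y : R) : Prop :=
  (∃ r, y = b * r * y) ∧ (∃ s, y = y * s * c) ∧ y * a * b = b ∧ c * a * y = c

/-- `x` is the group inverse of `w`. -/
def IsGroupInverse {R : Type*} [Ring R] (w x : R) : Prop :=
  w * x * w = w ∧ x * w * x = x ∧ w * x = x * w

theorem IsGroupInverse.symm {R : Type*} [Ring R] {w x : R} (h : IsGroupInverse w x) :
    IsGroupInverse x w :=
  ⟨h.2.1, h.1, h.2.2.symm⟩

namespace IsBCInverse

variable {R : Type*} [Ring R] {a b c d y z : R}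

theorem mul_mul_left_eq (hy : IsBCInverse a b c y) (hz : IsBCInverse d b c z) :
    z * d * y = y := by
  obtain ⟨r, hr⟩ := hy.1
  calc z * d * y = z * d * (b * r * y) := by rw [← hr]
    _ = z * d * b * r * y := by simp only [mul_assoc]
    _ = b * r * y := by rw [hz.2.2.1]
    _ = y := hr.symm

theorem mul_mul_right_eq (hy : IsBCInverse a b c y) (hz : IsBCInverse d b c z) :
    y * d * z = y := by
  obtain ⟨s, hs⟩ := hy.2.1
  calc y * d * z = y * s * c * d * z := by rw [← hs]
    _ = y * s * (c * d * z) := by simp only [mul_assoc]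
    _ = y * s * c := by rw [hz.2.2.2]
    _ = y := hs.symm

theorem mul_mul_self (hy : IsBCInverse a b c y) : y * a * y = y :=
  mul_mul_left_eq hy hy

/-- The first two axioms of a group inverse hold automatically; only commutativity is at stake. -/
theorem isGroupInverse_mul_mul_iff (hy : IsBCInverse a b c y) (hz : IsBCInverse d b c z) :
    IsGroupInverse (y * d) (z * a) ↔ y * a = z * d := by
  have hydz := mul_mul_right_eq hy hz
  have hzay := mul_mul_right_eq hz hy
  constructor
  · rintro ⟨-, -, hcomm⟩
    simpa only [← mul_assoc, hydz, hzay] using hcomm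
  · intro h
    refine ⟨?_, ?_, ?_⟩
    · simp only [← mul_assoc]
      rw [hydz, hy.mul_mul_self]
    · simp only [← mul_assoc]
      rw [hzay, hz.mul_mul_self]
    · simpa only [← mul_assoc, hydz, hzay] using h

end IsBCInverse

/-- characterizations of `y·a = z·d` for the (b,c)-inverses `y` of `a`
and `z` of `d`. -/
theorem equal_left_bc_idempotents_tfae {R : Type*} [Ring R] (a b c d y z : R)
    (hy : IsBCInverse a b c y) (hz : IsBCInverse d b c z) :
    List.TFAE
      [ y * a = z * d,
        z * d * y * a = y * a * z * d,
        y * d * z * a = z * a * y * d,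
        IsGroupInverse (y * d) (z * a),
        IsGroupInverse (z * a) (y * d) ] := by
  tfae_have 1 ↔ 2 := by rw [hy.mul_mul_left_eq hz, hz.mul_mul_left_eq hy]
  tfae_have 1 ↔ 3 := by rw [hy.mul_mul_right_eq hz, hz.mul_mul_right_eq hy]
  tfae_have 1 ↔ 4 := (hy.isGroupInverse_mul_mul_iff hz).symm
  tfae_have 4 ↔ 5 := ⟨IsGroupInverse.symm, IsGroupInverse.symm⟩
  tfae_finish
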